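/- In the Black-Scholes setting, for fixed S, T, σ > 0 and r, q ∈ ℝ, the function K ↦ C(S,K,T,r,q,σ) is twice differentiable on (0, ∞) with ∂²C/∂K² = exp(−r·T)·φ(d2)/(K·σ·√T); in particular ∂²C/∂K² > 0 for every K > 0, so the call price is a strictly convex function of the strike. -/

import Mathlib

open Real

/-- Standard normal density. -/
noncomputable def stdNormalPdf (x : ℝ) : ℝ := Real.exp (-x ^ 2 / 2) / Real.sqrt (2 * Real.pi)

/-- Standard normal cumulative distribution function. -/
noncomputable def stdNormalCdf (x : ℝ) : ℝ := ∫ t in Set.Iic x, stdNormalPdf t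

/-- Black-Scholes `d₁`. -/
noncomputable def bsD1 (S K T r q σ : ℝ) : ℝ :=
  (Real.log (S / K) + (r - q + σ ^ 2 / 2) * T) / (σ * Real.sqrt T)

/-- Black-Scholes `d₂`. -/
noncomputable def bsD2 (S K T r q σ : ℝ) : ℝ := bsD1 S K T r q σ - σ * Real.sqrt T

/-- Black-Scholes call option price. -/
noncomputable def bsCall (S K T r q σ : ℝ) : ℝ :=
  S * Real.exp (-q * T) * stdNormalCdf (bsD1 S K T r q σ) -
    K * Real.exp (-r * T) * stdNormalCdf (bsD2 S K T r q σ)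

/-!
Differentiating `C` in `K` produces, besides `-e^{-rT} N(d₂)`, the two density terms
`-(S e^{-qT} φ(d₁) - K e^{-rT} φ(d₂)) / (K σ √T)`, and these cancel: since `d₂ = d₁ - σ√T` and
`φ(x - c) = φ(x) e^{xc - c²/2}`, with `d₁ σ√T - σ²T/2 = log (S/K) + (r - q) T`, one gets
`K e^{-rT} φ(d₂) = S e^{-qT} φ(d₁)`. So `∂C/∂K = -e^{-rT} N(d₂)`, and one more differentiation,
with `∂d₂/∂K = -1/(K σ √T)`, gives `e^{-rT} φ(d₂)/(K σ √T) > 0`.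
-/

open Filter Topology MeasureTheory

lemma hasDerivAt_integral_Iic {E : Type*} [NormedAddCommGroup E] [NormedSpace ℝ E]
    [CompleteSpace E] {f : ℝ → E} (hf : Integrable f) (hcont : Continuous f) (x : ℝ) :
    HasDerivAt (fun y => ∫ t in Set.Iic y, f t) (f x) x := by
  have hsplit : (fun y => ∫ t in Set.Iic y, f t) =
      fun y => (∫ t in Set.Iic 0, f t) + ∫ t in (0 : ℝ)..y, f t := by
    funext y
    rw [← intervalIntegral.integral_Iic_sub_Iic hf.integrableOn hf.integrableOn]
    abel
  rw [hsplit]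
  exact (intervalIntegral.integral_hasDerivAt_right hf.intervalIntegrable
    hcont.aestronglyMeasurable.stronglyMeasurableAtFilter hcont.continuousAt).const_add _

lemma stdNormalPdf_pos (x : ℝ) : 0 < stdNormalPdf x := by
  unfold stdNormalPdf
  positivity

lemma continuous_stdNormalPdf : Continuous stdNormalPdf := by
  unfold stdNormalPdf
  fun_prop

lemma integrable_stdNormalPdf : Integrable stdNormalPdf := by
  have h : stdNormalPdf = fun x => exp (-(1 / 2) * x ^ 2) / √(2 * π) := by
    funext x
    unfold stdNormalPdf
    ring_nf
  rw [h]
  exact (integrable_exp_neg_mul_sq (by norm_num)).div_const _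

lemma hasDerivAt_stdNormalCdf (x : ℝ) : HasDerivAt stdNormalCdf (stdNormalPdf x) x :=
  hasDerivAt_integral_Iic integrable_stdNormalPdf continuous_stdNormalPdf x

lemma stdNormalPdf_sub (x c : ℝ) :
    stdNormalPdf (x - c) = stdNormalPdf x * exp (x * c - c ^ 2 / 2) := by
  unfold stdNormalPdf
  rw [div_mul_eq_mul_div, ← exp_add]
  ring_nf

lemma bsD1_mul_sub (S K T r q : ℝ) {σ : ℝ} (hT : 0 < T) (hσ : σ ≠ 0) :
    bsD1 S K T r q σ * (σ * √T) - (σ * √T) ^ 2 / 2 = log (S / K) + (r - q) * T := by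
  have hsqrt : √T ≠ 0 := (sqrt_pos.2 hT).ne'
  rw [bsD1, div_mul_cancel₀ _ (mul_ne_zero hσ hsqrt), mul_pow, sq_sqrt hT.le]
  ring

lemma bsCall_pdf_identity {S K T : ℝ} (r q : ℝ) {σ : ℝ} (hS : 0 < S) (hK : 0 < K)
    (hT : 0 < T) (hσ : σ ≠ 0) :
    S * exp (-q * T) * stdNormalPdf (bsD1 S K T r q σ) =
      K * exp (-r * T) * stdNormalPdf (bsD2 S K T r q σ) := by
  rw [bsD2, stdNormalPdf_sub, bsD1_mul_sub S K T r q hT hσ, exp_add, exp_log (div_pos hS hK)]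
  have hexp : exp (-r * T) * exp ((r - q) * T) = exp (-q * T) := by
    rw [← exp_add]
    ring_nf
  rw [← hexp]
  field_simp

lemma hasDerivAt_bsD1_strike {S K : ℝ} (T r q σ : ℝ) (hS : S ≠ 0) (hK : K ≠ 0) :
    HasDerivAt (fun k => bsD1 S k T r q σ) (-1 / (K * σ * √T)) K := by
  have hlog : HasDerivAt (fun k => log (S / k)) (-1 / K) K := by
    refine (((hasDerivAt_const K S).div (hasDerivAt_id K) hK).log
      (div_ne_zero hS hK)).congr_deriv ?_
    simp only [Pi.div_apply, id]
    field_simp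
    ring
  refine ((hlog.add_const ((r - q + σ ^ 2 / 2) * T)).div_const (σ * √T)).congr_deriv ?_
  rw [div_div, mul_assoc]

lemma hasDerivAt_bsD2_strike {S K : ℝ} (T r q σ : ℝ) (hS : S ≠ 0) (hK : K ≠ 0) :
    HasDerivAt (fun k => bsD2 S k T r q σ) (-1 / (K * σ * √T)) K :=
  (hasDerivAt_bsD1_strike T r q σ hS hK).sub_const _

lemma hasDerivAt_bsCall_strike {S K T : ℝ} (r q : ℝ) {σ : ℝ} (hS : 0 < S) (hK : 0 < K)
    (hT : 0 < T) (hσ : σ ≠ 0) :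
    HasDerivAt (fun k => bsCall S k T r q σ)
      (-(exp (-r * T) * stdNormalCdf (bsD2 S K T r q σ))) K := by
  have hN1 := (hasDerivAt_stdNormalCdf _).comp K (hasDerivAt_bsD1_strike T r q σ hS.ne' hK.ne')
  have hN2 := (hasDerivAt_stdNormalCdf _).comp K (hasDerivAt_bsD2_strike T r q σ hS.ne' hK.ne')
  refine ((hN1.const_mul (S * exp (-q * T))).sub
    (((hasDerivAt_id K).mul_const (exp (-r * T))).mul hN2)).congr_deriv ?_
  simp only [Function.comp_apply, id]
  linear_combination (-1 / (K * σ * √T)) * bsCall_pdf_identity r q hS hK hT hσ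

theorem bsCall_second_deriv_strike (S T σ r q : ℝ) (hS : 0 < S) (hT : 0 < T) (hσ : 0 < σ) :
    ∀ K : ℝ, 0 < K →
      DifferentiableAt ℝ (fun k => bsCall S k T r q σ) K ∧
      HasDerivAt (deriv (fun k => bsCall S k T r q σ))
        (Real.exp (-r * T) * stdNormalPdf (bsD2 S K T r q σ) / (K * σ * Real.sqrt T)) K ∧
      0 < Real.exp (-r * T) * stdNormalPdf (bsD2 S K T r q σ) / (K * σ * Real.sqrt T) := by
  intro K hK
  refine ⟨(hasDerivAt_bsCall_strike r q hS hK hT hσ.ne').differentiableAt, ?_, ?_⟩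
  · have hderiv : deriv (fun k => bsCall S k T r q σ) =ᶠ[𝓝 K]
        fun k => -(exp (-r * T) * stdNormalCdf (bsD2 S k T r q σ)) := by
      filter_upwards [eventually_gt_nhds hK] with k hk
      exact (hasDerivAt_bsCall_strike r q hS hk hT hσ.ne').deriv
    refine HasDerivAt.congr_of_eventuallyEq ?_ hderiv
    refine (((hasDerivAt_stdNormalCdf _).comp K
      (hasDerivAt_bsD2_strike T r q σ hS.ne' hK.ne')).const_mul (exp (-r * T))).neg.congr_deriv ?_
    ring
  · have := stdNormalPdf_pos (bsD2 S K T r q σ)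
    have := sqrt_pos.2 hT
    positivity
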